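/- arXiv:2603.16518 — 2 statements merged into one kernel-verified Lean document; each statement's English description precedes it below -/
import Mathlib

section
/- Let F be a number field, let p be a prime ideal of O_F with valuation ord_p, and let a, b, c, d ∈ F with λ = ad - bc ≠ 0. Suppose that for an integer n, 2·min(ord_p(a), ord_p(b) + n, ord_p(c) - n, ord_p(d)) = ord_p(λ). Then each entry of the matrix [[a^2 + bc, b(a+d)], [c(a+d), bc + d^2]], after shifting the (1,2)-entry valuation by n and the (2,1)-entry by -n, has p-adic valuation at least ord_p(λ); that is, ord_p(a^2 + bc) ≥ ord_p(λ), ord_p(b(a+d)) + n ≥ ord_p(λ), ord_p(c(a+d)) - n ≥ ord_p(λ), and ord_p(bc + d^2) ≥ ord_p(λ). -/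
/-!
`ord_p` is an additive valuation. If `m` is the minimum in the hypothesis, so that
`ord_p(λ) = 2m`, every entry of `g²` is a sum of products of two entries of `g` whose shifts
`±n` cancel, each of which has shifted valuation at least `m`; the ultrametric inequality
then bounds each entry below by `2m`.
-/

open IsDedekindDomain NumberField

open scoped Classical in
/-- The `p`-adic order `ord_p : F → WithTop ℤ` attached to a prime `p` of the
ring of integers of a number field `F`, with the convention `ord_p(0) = ⊤`. -/
noncomputable def ordp {F : Type*} [Field F] [NumberField F]
    (v : HeightOneSpectrum (𝓞 F)) (x : F) : WithTop ℤ :=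
  if hx : x = 0 then ⊤
  else (((-Multiplicative.toAdd (WithZero.unzero
    ((Valuation.ne_zero_iff (v.valuation F)).mpr hx))) : ℤ) : WithTop ℤ)

namespace AddValuation

variable {R Γ₀ : Type*} [Ring R] [LinearOrderedAddCommMonoidWithTop Γ₀] (w : AddValuation R Γ₀)
  {a b c d : R} {m : Γ₀}

theorem add_le_map_sq_add_mul (ha : m ≤ w a) (hbc : m + m ≤ w b + w c) :
    m + m ≤ w (a ^ 2 + b * c) :=
  calc m + m ≤ min (w a + w a) (w b + w c) := le_min (add_le_add ha ha) hbc
    _ = min (w (a ^ 2)) (w (b * c)) := by rw [sq, w.map_mul, w.map_mul]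
    _ ≤ w (a ^ 2 + b * c) := w.map_add _ _

theorem add_le_map_mul_add_add {s : Γ₀} (hb : m ≤ w b + s) (ha : m ≤ w a) (hd : m ≤ w d) :
    m + m ≤ w (b * (a + d)) + s :=
  calc m + m ≤ (w b + s) + min (w a) (w d) := add_le_add hb (le_min ha hd)
    _ ≤ (w b + s) + w (a + d) := add_le_add le_rfl (w.map_add a d)
    _ = w (b * (a + d)) + s := by rw [w.map_mul, add_right_comm]

end AddValuation

section ordp

variable {F : Type*} [Field F] [NumberField F] (v : HeightOneSpectrum (𝓞 F))

theorem ordp_zero : ordp v 0 = ⊤ := dif_pos rfl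

theorem ordp_of_ne_zero {x : F} (hx : x ≠ 0) :
    ordp v x = ((-WithZero.log (v.valuation F x) : ℤ) : WithTop ℤ) := by
  rw [ordp, dif_neg hx, WithZero.toAdd_unzero_eq_log]

theorem ordp_one : ordp v 1 = 0 := by
  simp [ordp_of_ne_zero v one_ne_zero]

theorem ordp_mul (x y : F) : ordp v (x * y) = ordp v x + ordp v y := by
  rcases eq_or_ne x 0 with rfl | hx
  · simp [ordp_zero]
  rcases eq_or_ne y 0 with rfl | hy
  · simp [ordp_zero]
  have hvx : v.valuation F x ≠ 0 := by simpa using hx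
  have hvy : v.valuation F y ≠ 0 := by simpa using hy
  rw [ordp_of_ne_zero v (mul_ne_zero hx hy), ordp_of_ne_zero v hx, ordp_of_ne_zero v hy,
    map_mul, WithZero.log_mul hvx hvy, neg_add, WithTop.coe_add]

theorem ordp_le_ordp_of_valuation_le {x y : F} (hx : x ≠ 0) (hy : y ≠ 0)
    (h : v.valuation F y ≤ v.valuation F x) : ordp v x ≤ ordp v y := by
  rw [ordp_of_ne_zero v hx, ordp_of_ne_zero v hy, WithTop.coe_le_coe, neg_le_neg_iff,
    WithZero.log_le_log (by simpa using hy) (by simpa using hx)]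
  exact h

theorem min_ordp_le_ordp_add (x y : F) : min (ordp v x) (ordp v y) ≤ ordp v (x + y) := by
  rcases eq_or_ne x 0 with rfl | hx
  · simp
  rcases eq_or_ne y 0 with rfl | hy
  · simp
  rcases eq_or_ne (x + y) 0 with hxy | hxy
  · simp [hxy, ordp_zero]
  rcases le_max_iff.mp ((v.valuation F).map_add x y) with h | h
  · exact min_le_of_left_le (ordp_le_ordp_of_valuation_le v hx hxy h)
  · exact min_le_of_right_le (ordp_le_ordp_of_valuation_le v hy hxy h)

noncomputable def ordpAddValuation : AddValuation F (WithTop ℤ) :=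
  AddValuation.of (ordp v) (ordp_zero v) (ordp_one v) (min_ordp_le_ordp_add v) (ordp_mul v)

end ordp

theorem square_matrix_entries_ord_ge_general {F : Type*} [Field F] [NumberField F]
    (v : HeightOneSpectrum (𝓞 F)) (a b c d : F) (lam : F) (n : ℤ)
    (h : 2 • min (min (ordp v a) (ordp v b + (n : WithTop ℤ)))
        (min (ordp v c + ((-n : ℤ) : WithTop ℤ)) (ordp v d)) = ordp v lam) :
    ordp v lam ≤ ordp v (a ^ 2 + b * c) ∧
    ordp v lam ≤ ordp v (b * (a + d)) + (n : WithTop ℤ) ∧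
    ordp v lam ≤ ordp v (c * (a + d)) + ((-n : ℤ) : WithTop ℤ) ∧
    ordp v lam ≤ ordp v (b * c + d ^ 2) := by
  set m := min (min (ordp v a) (ordp v b + (n : WithTop ℤ)))
    (min (ordp v c + ((-n : ℤ) : WithTop ℤ)) (ordp v d))
  have ha : m ≤ ordp v a := (min_le_left _ _).trans (min_le_left _ _)
  have hb : m ≤ ordp v b + (n : WithTop ℤ) := (min_le_left _ _).trans (min_le_right _ _)
  have hc : m ≤ ordp v c + ((-n : ℤ) : WithTop ℤ) := (min_le_right _ _).trans (min_le_left _ _)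
  have hd : m ≤ ordp v d := (min_le_right _ _).trans (min_le_right _ _)
  have hbc : m + m ≤ ordp v b + ordp v c :=
    calc m + m ≤ (ordp v b + (n : WithTop ℤ)) + (ordp v c + ((-n : ℤ) : WithTop ℤ)) :=
          add_le_add hb hc
      _ = ordp v b + ordp v c := by
        rw [add_add_add_comm, ← WithTop.coe_add, add_neg_cancel, WithTop.coe_zero, add_zero]
  rw [← h, two_nsmul]
  set w := ordpAddValuation v
  refine ⟨w.add_le_map_sq_add_mul ha hbc, w.add_le_map_mul_add_add hb ha hd,
    w.add_le_map_mul_add_add hc ha hd, ?_⟩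
  rw [add_comm (b * c)]
  exact w.add_le_map_sq_add_mul hd hbc

/-- If `2 · min(ord_p(a), ord_p(b)+n, ord_p(c)-n, ord_p(d)) = ord_p(λ)` with
`λ = ad - bc ≠ 0`, then the entries of the square matrix
`[[a²+bc, b(a+d)],[c(a+d), bc+d²]]`, with the off-diagonal valuations shifted
by `±n`, all have `p`-adic valuation at least `ord_p(λ)`. -/
theorem square_matrix_entries_ord_ge {F : Type*} [Field F] [NumberField F]
    (v : HeightOneSpectrum (𝓞 F)) (a b c d : F) (lam : F)
    (hlam : lam = a * d - b * c) (hlam0 : lam ≠ 0) (n : ℤ)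
    (h : 2 • min (min (ordp v a) (ordp v b + (n : WithTop ℤ)))
        (min (ordp v c + ((-n : ℤ) : WithTop ℤ)) (ordp v d)) = ordp v lam) :
    ordp v lam ≤ ordp v (a ^ 2 + b * c) ∧
    ordp v lam ≤ ordp v (b * (a + d)) + (n : WithTop ℤ) ∧
    ordp v lam ≤ ordp v (c * (a + d)) + ((-n : ℤ) : WithTop ℤ) ∧
    ordp v lam ≤ ordp v (b * c + d ^ 2) :=
  square_matrix_entries_ord_ge_general v a b c d lam n h
end

section
/- Let q > 1 be real, t ∈ ℝ, s ∈ ℂ with Re(s) > 3/2, let u_1, u_2 be complex numbers of modulus 1, and let α, β be complex numbers with |α|, |β| ≤ q^{1/2} (Satake parameters). Define λ_k by the generating identity Σ_k λ_k X^k = 1/((1-αq^{1/2}X)(1-βq^{1/2}X)) in the sense λ_k = q^{k/2} Σ_{l=0}^k α^l β^{k-l}. Then Σ_{k=0}^{∞} λ_k u_2^k q^{-k(s-it)/2 - k/2} · (1 - u_1^{k+1} q^{-it(k+1)})/(1 - u_1 q^{-it}) = (1 - αβ u_1 u_2^2 q^{-s}) / [(1 - α u_2 q^{-(s-it)/2})(1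 - β u_2 q^{-(s-it)/2})(1 - α u_1 u_2 q^{-(s+it)/2})(1 - β u_1 u_2 q^{-(s+it)/2})], provided all denominators are nonzero. -/
/-!
Put `Q = q^{-(s-it)/2}`, `A = α u₂ Q`, `B = β u₂ Q` and `r = u₁ q^{-it}`. The `k`-th term is
`hₖ(A, B) (1 + r + ⋯ + rᵏ)`, where `hₖ(x, y) = ∑_{l ≤ k} xˡ y^{k-l}` has generating function
`1 / ((1 - x)(1 - y))`. The bound `|α|, |β| ≤ √q` together with `Re s > 1` gives `|A|, |B| < 1`,
and `|r| = 1`, so the series converges absolutely and equals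
`(1 - A B r) / ((1 - A)(1 - B)(1 - A r)(1 - B r))`, which is the stated quotient.
-/

open Complex Finset

section CompleteHomogeneous

def completeHomogeneous {R : Type*} [CommSemiring R] (x y : R) (k : ℕ) : R :=
  ∑ l ∈ range (k + 1), x ^ l * y ^ (k - l)

theorem completeHomogeneous_mul_mul {R : Type*} [CommSemiring R] (x y c : R) (k : ℕ) :
    completeHomogeneous (x * c) (y * c) k = completeHomogeneous x y k * c ^ k := by
  rw [completeHomogeneous, completeHomogeneous, sum_mul]
  refine sum_congr rfl fun l hl => ?_
  rw [mul_pow, mul_pow, mul_mul_mul_comm, ← pow_add,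
    Nat.add_sub_cancel' (Nat.lt_succ_iff.mp (mem_range.mp hl))]

variable {𝕜 : Type*} [NormedField 𝕜] [CompleteSpace 𝕜] {x y r : 𝕜}

theorem hasSum_completeHomogeneous (hx : ‖x‖ < 1) (hy : ‖y‖ < 1) :
    HasSum (completeHomogeneous x y) ((1 - x)⁻¹ * (1 - y)⁻¹) := by
  have h := hasSum_sum_range_mul_of_summable_norm
    (summable_norm_geometric_of_norm_lt_one hx) (summable_norm_geometric_of_norm_lt_one hy)
  rwa [tsum_geometric_of_norm_lt_one hx, tsum_geometric_of_norm_lt_one hy] at h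

theorem one_sub_mul_inv_sub_div_one_sub {K : Type*} [Field K] {x y r : K}
    (hx : 1 - x ≠ 0) (hy : 1 - y ≠ 0) (hxr : 1 - x * r ≠ 0) (hyr : 1 - y * r ≠ 0)
    (hr : 1 - r ≠ 0) :
    ((1 - x)⁻¹ * (1 - y)⁻¹ - r * ((1 - x * r)⁻¹ * (1 - y * r)⁻¹)) * (1 - r)⁻¹ =
      (1 - x * y * r) / ((1 - x) * (1 - y) * (1 - x * r) * (1 - y * r)) := by
  field_simp
  ring

/-- Since `r^{k+1} hₖ(x, y) = r hₖ(x r, y r)`, the series is a difference of two generating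
functions of `hₖ`, divided by `1 - r`. -/
theorem hasSum_completeHomogeneous_mul_geom (hx : ‖x‖ < 1) (hy : ‖y‖ < 1) (hr : ‖r‖ ≤ 1)
    (hr1 : r ≠ 1) :
    HasSum (fun k => completeHomogeneous x y k * ((1 - r ^ (k + 1)) / (1 - r)))
      ((1 - x * y * r) / ((1 - x) * (1 - y) * (1 - x * r) * (1 - y * r))) := by
  have hxr : ‖x * r‖ < 1 := by rw [norm_mul]; nlinarith [norm_nonneg x]
  have hyr : ‖y * r‖ < 1 := by rw [norm_mul]; nlinarith [norm_nonneg y]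
  have h := ((hasSum_completeHomogeneous hx hy).sub
    ((hasSum_completeHomogeneous hxr hyr).mul_left r)).mul_right (1 - r)⁻¹
  rw [one_sub_mul_inv_sub_div_one_sub (isUnit_one_sub_of_norm_lt_one hx).ne_zero
    (isUnit_one_sub_of_norm_lt_one hy).ne_zero (isUnit_one_sub_of_norm_lt_one hxr).ne_zero
    (isUnit_one_sub_of_norm_lt_one hyr).ne_zero (sub_ne_zero.mpr hr1.symm)] at h
  refine h.congr_fun fun k => ?_
  rw [completeHomogeneous_mul_mul, div_eq_mul_inv]
  ring

end CompleteHomogeneous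

theorem norm_mul_cpow_neg_half_lt_one {q : ℝ} (hq : 1 < q) {a w : ℂ} (ha : ‖a‖ ≤ √q)
    (hw : 1 < w.re) : ‖a * (q : ℂ) ^ (-w / 2)‖ < 1 := by
  have hq0 : 0 < q := one_pos.trans hq
  have hre : (-w / 2).re = -w.re / 2 := by simp
  calc ‖a * (q : ℂ) ^ (-w / 2)‖ ≤ √q * q ^ (-w.re / 2) := by
        rw [norm_mul, norm_cpow_eq_rpow_re_of_pos hq0, hre]
        gcongr
    _ = q ^ ((1 - w.re) / 2) := by
        rw [Real.sqrt_eq_rpow, ← Real.rpow_add hq0]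
        ring_nf
    _ < 1 := Real.rpow_lt_one_of_one_lt_of_neg hq (by linarith)

theorem rpow_half_mul_sum_mul_pow_mul_cpow {q : ℝ} (hq : 0 < q) (α β u w : ℂ) (k : ℕ) :
    ((q ^ ((k : ℝ) / 2) : ℝ) : ℂ) * (∑ l ∈ range (k + 1), α ^ l * β ^ (k - l)) * u ^ k *
        (q : ℂ) ^ (-((k : ℂ) * w) / 2 - (k : ℂ) / 2) =
      completeHomogeneous (α * u * (q : ℂ) ^ (-w / 2)) (β * u * (q : ℂ) ^ (-w / 2)) k := by
  have hpow : ((q ^ ((k : ℝ) / 2) : ℝ) : ℂ) * (q : ℂ) ^ (-((k : ℂ) * w) / 2 - (k : ℂ) / 2) =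
      ((q : ℂ) ^ (-w / 2)) ^ k := by
    rw [ofReal_cpow hq.le, ← cpow_add _ _ (ofReal_ne_zero.mpr hq.ne'), ← cpow_nat_mul]
    congr 1
    push_cast
    ring
  rw [mul_assoc α, mul_assoc β, completeHomogeneous_mul_mul, mul_pow, ← hpow, completeHomogeneous]
  ring

theorem pow_succ_mul_cpow_mul_add_one (u x z : ℂ) (k : ℕ) :
    u ^ (k + 1) * x ^ (z * ((k : ℂ) + 1)) = (u * x ^ z) ^ (k + 1) := by
  rw [mul_pow, ← cpow_nat_mul]
  congr 2
  push_cast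
  ring

theorem local_hecke_euler_identity_general (q : ℝ) (hq : 1 < q) (t : ℝ) (s : ℂ)
    (hs : (3 : ℝ) / 2 < s.re) (u1 u2 : ℂ) (hu1 : ‖u1‖ = 1) (hu2 : ‖u2‖ = 1)
    (α β : ℂ) (hα : ‖α‖ ≤ Real.sqrt q) (hβ : ‖β‖ ≤ Real.sqrt q)
    (lam : ℕ → ℂ)
    (hlam : ∀ k : ℕ, lam k =
      ((q ^ ((k : ℝ) / 2) : ℝ) : ℂ) * ∑ l ∈ Finset.range (k + 1), α ^ l * β ^ (k - l))
    (hd0 : 1 - u1 * (q : ℂ) ^ (-(I * t)) ≠ 0) :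
    Summable (fun k : ℕ => ‖lam k * u2 ^ k *
        (q : ℂ) ^ (-((k : ℂ) * (s - I * t)) / 2 - (k : ℂ) / 2) *
        ((1 - u1 ^ (k + 1) * (q : ℂ) ^ (-(I * t) * ((k : ℂ) + 1))) /
          (1 - u1 * (q : ℂ) ^ (-(I * t))))‖) ∧
    ∑' k : ℕ, lam k * u2 ^ k *
        (q : ℂ) ^ (-((k : ℂ) * (s - I * t)) / 2 - (k : ℂ) / 2) *
        ((1 - u1 ^ (k + 1) * (q : ℂ) ^ (-(I * t) * ((k : ℂ) + 1))) /
          (1 - u1 * (q : ℂ) ^ (-(I * t)))) =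
      (1 - α * β * u1 * u2 ^ 2 * (q : ℂ) ^ (-s)) /
        ((1 - α * u2 * (q : ℂ) ^ (-(s - I * t) / 2)) *
          (1 - β * u2 * (q : ℂ) ^ (-(s - I * t) / 2)) *
          (1 - α * u1 * u2 * (q : ℂ) ^ (-(s + I * t) / 2)) *
          (1 - β * u1 * u2 * (q : ℂ) ^ (-(s + I * t) / 2))) := by
  have hq0 : 0 < q := one_pos.trans hq
  have hqc : (q : ℂ) ≠ 0 := ofReal_ne_zero.mpr hq0.ne'
  set Q := (q : ℂ) ^ (-(s - I * t) / 2)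
  set r := u1 * (q : ℂ) ^ (-(I * t))
  have hre : 1 < (s - I * t).re := by
    simp only [sub_re, mul_re, I_re, I_im, ofReal_re, ofReal_im, zero_mul, mul_zero, sub_self,
      sub_zero]
    linarith
  have hA : ‖α * u2 * Q‖ < 1 :=
    norm_mul_cpow_neg_half_lt_one hq (by rwa [norm_mul, hu2, mul_one]) hre
  have hB : ‖β * u2 * Q‖ < 1 :=
    norm_mul_cpow_neg_half_lt_one hq (by rwa [norm_mul, hu2, mul_one]) hre
  have hr : ‖r‖ = 1 := by simp [r, hu1, norm_cpow_eq_rpow_re_of_pos hq0]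
  have hsum := hasSum_completeHomogeneous_mul_geom hA hB hr.le (sub_ne_zero.mp hd0).symm
  have hhalf : (q : ℂ) ^ (-(s + I * t) / 2) = Q * (q : ℂ) ^ (-(I * t)) := by
    rw [← cpow_add _ _ hqc]; congr 1; ring
  have hfull : (q : ℂ) ^ (-s) = Q * Q * (q : ℂ) ^ (-(I * t)) := by
    rw [← cpow_add _ _ hqc, ← cpow_add _ _ hqc]; congr 1; ring
  simp only [hlam, rpow_half_mul_sum_mul_pow_mul_cpow hq0, pow_succ_mul_cpow_mul_add_one, hhalf,
    hfull]
  exact ⟨summable_norm_iff.mpr hsum.summable, hsum.tsum_eq.trans (by ring)⟩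

/-- Local Euler factor identity behind
`R_{χ₁,χ₂}(s) = L((s-it)/2, φ⊗χ₂) L((s+it)/2, φ⊗χ₁χ₂) / L(s, ωχ₁χ₂²)`:
with Hecke eigenvalues `λ_k = q^{k/2} ∑_{l≤k} αˡ β^{k-l}` and `|α|,|β| ≤ √q`,
`∑_k λ_k u₂^k q^{-k(s-it)/2 - k/2} σ_{-it}(χ₁,p^k) = (1 - αβu₁u₂² q^{-s}) / [⋯]`. -/
theorem local_hecke_euler_identity (q : ℝ) (hq : 1 < q) (t : ℝ) (s : ℂ)
    (hs : (3 : ℝ) / 2 < s.re) (u1 u2 : ℂ) (hu1 : ‖u1‖ = 1) (hu2 : ‖u2‖ = 1)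
    (α β : ℂ) (hα : ‖α‖ ≤ Real.sqrt q) (hβ : ‖β‖ ≤ Real.sqrt q)
    (lam : ℕ → ℂ)
    (hlam : ∀ k : ℕ, lam k =
      ((q ^ ((k : ℝ) / 2) : ℝ) : ℂ) * ∑ l ∈ Finset.range (k + 1), α ^ l * β ^ (k - l))
    (hd0 : 1 - u1 * (q : ℂ) ^ (-(I * t)) ≠ 0)
    (hd1 : 1 - α * u2 * (q : ℂ) ^ (-(s - I * t) / 2) ≠ 0)
    (hd2 : 1 - β * u2 * (q : ℂ) ^ (-(s - I * t) / 2) ≠ 0)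
    (hd3 : 1 - α * u1 * u2 * (q : ℂ) ^ (-(s + I * t) / 2) ≠ 0)
    (hd4 : 1 - β * u1 * u2 * (q : ℂ) ^ (-(s + I * t) / 2) ≠ 0) :
    Summable (fun k : ℕ => ‖lam k * u2 ^ k *
        (q : ℂ) ^ (-((k : ℂ) * (s - I * t)) / 2 - (k : ℂ) / 2) *
        ((1 - u1 ^ (k + 1) * (q : ℂ) ^ (-(I * t) * ((k : ℂ) + 1))) /
          (1 - u1 * (q : ℂ) ^ (-(I * t))))‖) ∧
    ∑' k : ℕ, lam k * u2 ^ k *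
        (q : ℂ) ^ (-((k : ℂ) * (s - I * t)) / 2 - (k : ℂ) / 2) *
        ((1 - u1 ^ (k + 1) * (q : ℂ) ^ (-(I * t) * ((k : ℂ) + 1))) /
          (1 - u1 * (q : ℂ) ^ (-(I * t)))) =
      (1 - α * β * u1 * u2 ^ 2 * (q : ℂ) ^ (-s)) /
        ((1 - α * u2 * (q : ℂ) ^ (-(s - I * t) / 2)) *
          (1 - β * u2 * (q : ℂ) ^ (-(s - I * t) / 2)) *
          (1 - α * u1 * u2 * (q : ℂ) ^ (-(s + I * t) / 2)) *
          (1 - β * u1 * u2 * (q : ℂ) ^ (-(s + I * t) / 2))) :=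
  local_hecke_euler_identity_general q hq t s hs u1 u2 hu1 hu2 α β hα hβ lam hlam hd0
end
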